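/- Let (𝒟, π) be a representation of a unital *-algebra A on a Hilbert C*-module E over a C*-algebra D. For a₁, …, aₙ ∈ A set b := Σ_{j=1}^n aⱼ* aⱼ. Then for every i ∈ {1,…,n} and every ξ ∈ 𝒟 one has 0 ≤ ⟪ξ,ξ⟫ + ⟪π(aᵢ)ξ, π(aᵢ)ξ⟫ ≤ (5/4)·(⟪ξ,ξ⟫ + ⟪π(b)ξ, π(b)ξ⟫) in the partial order of D. In particular, the graph norms ‖ξ‖_a := ‖⟪ξ,ξ⟫ + ⟪π(a)ξ, π(a)ξ⟫‖^{1/2} satisfy ‖ξ‖_{aᵢ} ≤ (5/4)·‖ξ‖_b for all ξ ∈ 𝒟, so the set of graph norms, ordered by domination up to a positive constant, is directed. -/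

import Mathlib

open scoped RightActions

/-- The Hilbert C⋆-module class as it stood in Mathlib of December 2024 (right `Aᵐᵒᵖ`-action,
inner product `A`-linear on the right in the second argument). -/
class CStarModuleOld (A : outParam <| Type*) (E : Type*) [NonUnitalSemiring A] [StarRing A]
    [Module ℂ A] [AddCommGroup E] [Module ℂ E] [PartialOrder A] [SMul Aᵐᵒᵖ E] [Norm A] [Norm E]
    extends Inner A E where
  inner_add_right {x} {y} {z} : inner x (y + z) = inner x y + inner x z
  inner_self_nonneg {x} : 0 ≤ inner x x
  inner_self {x} : inner x x = 0 ↔ x = 0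
  inner_op_smul_right {a : A} {x y : E} : inner x (y <• a) = inner x y * a
  inner_smul_right_complex {z : ℂ} {x} {y} : inner x (z • y) = z • inner x y
  star_inner x y : star (inner x y) = inner y x
  norm_eq_sqrt_norm_inner_self x : ‖x‖ = √‖inner x x‖

variable (A : Type*) [Ring A] [Algebra ℂ A] [StarRing A] [StarModule ℂ A]
variable (D : Type*) [NonUnitalNormedRing D] [StarRing D] [CStarRing D] [PartialOrder D]
  [StarOrderedRing D] [NormedSpace ℂ D] [IsScalarTower ℂ D D] [SMulCommClass ℂ D D]
  [StarModule ℂ D] [CompleteSpace D]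
variable (E : Type*) [NormedAddCommGroup E] [NormedSpace ℂ E] [SMul Dᵐᵒᵖ E] [CStarModuleOld D E]
  [CompleteSpace E]

/-- A representation of a unital `⋆`-algebra `A` on a Hilbert C*-module `E` over a C*-algebra
`D`: a dense `D`-submodule `dom ⊆ E` together with a unital algebra homomorphism `π` from `A`
into the `D`-module endomorphisms of `dom` satisfying `⟪π a ξ, η⟫ = ⟪ξ, π (star a) η⟫` for the
`D`-valued inner product. -/
structure ModuleRep where
  dom : Submodule ℂ E
  smul_mem' : ∀ (d : D) {x : E}, x ∈ dom → x <• d ∈ dom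
  dense : Dense (dom : Set E)
  π : A → (dom →ₗ[ℂ] dom)
  π_one : π 1 = LinearMap.id
  π_mul : ∀ a b : A, π (a * b) = (π a).comp (π b)
  π_add : ∀ a b : A, π (a + b) = π a + π b
  π_smul : ∀ (c : ℂ) (a : A), π (c • a) = c • π a
  π_smulD : ∀ (a : A) (d : D) (x : dom),
    ((π a ⟨(x : E) <• d, smul_mem' d x.2⟩ : dom) : E) = ((π a x : dom) : E) <• d
  π_star : ∀ (a : A) (ξ η : dom),
    (inner D ((π a ξ : dom) : E) ((η : dom) : E) : D) = inner D ((ξ : dom) : E) ((π (star a) η : dom) : E)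

variable {A D E}

/-- The square of the graph norm of `ξ` for the element `a`, namely
`⟪ξ, ξ⟫ + ⟪π a ξ, π a ξ⟫ ∈ D`. -/
noncomputable def graphSq (ρ : ModuleRep A D E) (a : A) (ξ : ρ.dom) : D :=
  (inner D ((ξ : ρ.dom) : E) ((ξ : ρ.dom) : E) : D) +
    inner D ((ρ.π a ξ : ρ.dom) : E) ((ρ.π a ξ : ρ.dom) : E)

/-- The graph norm `‖ξ‖_a = ‖⟪ξ, ξ⟫ + ⟪π a ξ, π a ξ⟫‖^(1/2)`. -/
noncomputable def graphNorm (ρ : ModuleRep A D E) (a : A) (ξ : ρ.dom) : ℝ :=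
  Real.sqrt ‖graphSq ρ a ξ‖

/-!
Put `b := ∑ j, (a j)⋆ (a j)` and `η := π b ξ`. Since `⟪π c ξ, π c ξ⟫ = ⟪ξ, π (c⋆ c) ξ⟫ ≥ 0` for
every `c`, one summand is dominated by the whole sum: `⟪π (a i) ξ, π (a i) ξ⟫ ≤ ⟪ξ, η⟫`. As `b` is
self-adjoint, `⟪η, ξ⟫ = ⟪ξ, η⟫`, and expanding `0 ≤ ⟪ξ/2 - η, ξ/2 - η⟫` gives
`⟪ξ, η⟫ ≤ ¼⟪ξ, ξ⟫ + ⟪η, η⟫`. Hence `⟪ξ, ξ⟫ + ⟪π (a i) ξ, π (a i) ξ⟫ ≤ (5/4)(⟪ξ, ξ⟫ + ⟪η, η⟫)`,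
and the bound on graph norms follows because the norm of a C⋆-algebra is monotone on positive
elements.
-/

namespace CStarModuleOld

section
variable {D E : Type*} [NonUnitalRing D] [StarRing D] [Module ℂ D] [PartialOrder D] [Norm D]
  [AddCommGroup E] [Module ℂ E] [SMul Dᵐᵒᵖ E] [Norm E] [CStarModuleOld D E]

def innerAddHom (x : E) : E →+ D :=
  AddMonoidHom.mk' (inner D x) fun _ _ => inner_add_right

lemma inner_sub_right (x y z : E) : inner D x (y - z) = inner D x y - inner D x z :=
  map_sub (innerAddHom x) y z

lemma inner_sum_right {ι : Type*} (s : Finset ι) (x : E) (f : ι → E) :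
    inner D x (∑ i ∈ s, f i) = ∑ i ∈ s, inner D x (f i) :=
  map_sum (innerAddHom x) f s

lemma inner_sub_left (x y z : E) : inner D (x - y) z = inner D x z - inner D y z := by
  rw [← star_inner z, inner_sub_right, star_sub, star_inner, star_inner]

lemma inner_smul_right_real (r : ℝ) (x y : E) : inner D x (r • y) = r • inner D x y :=
  inner_smul_right_complex (z := (r : ℂ))

lemma inner_smul_left_real [StarModule ℂ D] (r : ℝ) (x y : E) :
    inner D (r • x) y = r • inner D x y := by
  rw [← star_inner y, inner_smul_right_real]
  change star ((r : ℂ) • inner D y x) = (r : ℂ) • inner D x y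
  rw [star_smul, star_inner, Complex.star_def, Complex.conj_ofReal]

lemma inner_smul_self_real [StarModule ℂ D] (r : ℝ) (x : E) :
    inner D (r • x) (r • x) = (r * r) • inner D x x := by
  rw [inner_smul_left_real, inner_smul_right_real, smul_smul]

lemma inner_le_of_inner_comm [StarOrderedRing D] [StarModule ℂ D] {x y : E}
    (h : inner D y x = inner D x y) :
    inner D x y ≤ (1 / 4 : ℝ) • inner D x x + inner D y y := by
  have hpos : (0 : D) ≤ inner D ((1 / 2 : ℝ) • x - y) ((1 / 2 : ℝ) • x - y) :=
    CStarModuleOld.inner_self_nonneg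
  simp only [inner_sub_left, inner_sub_right, inner_smul_left_real, inner_smul_right_real,
    h] at hpos
  exact sub_nonneg.mp (by convert hpos using 1; module)

end

end CStarModuleOld

open CStarModuleOld

namespace ModuleRep

variable {A : Type*} [Ring A] [Algebra ℂ A] [StarRing A]
  {D : Type*} [NonUnitalNormedRing D] [StarRing D] [PartialOrder D] [NormedSpace ℂ D]
  {E : Type*} [NormedAddCommGroup E] [NormedSpace ℂ E] [SMul Dᵐᵒᵖ E] [CStarModuleOld D E]
  (ρ : ModuleRep A D E)

lemma π_sum {ι : Type*} (s : Finset ι) (f : ι → A) :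
    ρ.π (∑ i ∈ s, f i) = ∑ i ∈ s, ρ.π (f i) :=
  map_sum (AddMonoidHom.mk' ρ.π ρ.π_add) f s

lemma inner_π_self (c : A) (ξ : ρ.dom) :
    inner D (ρ.π c ξ : E) (ρ.π c ξ : E) = inner D (ξ : E) (ρ.π (star c * c) ξ : E) := by
  rw [ρ.π_star, ρ.π_mul]
  rfl

lemma inner_π_self_le_inner_π_sum [StarOrderedRing D] {ι : Type*} [Fintype ι] (a : ι → A)
    (i : ι) (ξ : ρ.dom) :
    inner D (ρ.π (a i) ξ : E) (ρ.π (a i) ξ : E) ≤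
      inner D (ξ : E) (ρ.π (∑ j, star (a j) * a j) ξ : E) := by
  rw [π_sum, LinearMap.sum_apply, Submodule.coe_sum, inner_sum_right, inner_π_self]
  refine Finset.single_le_sum (f := fun j => inner D (ξ : E) (ρ.π (star (a j) * a j) ξ : E))
    (fun j _ => ?_) (Finset.mem_univ i)
  rw [← inner_π_self]
  exact CStarModuleOld.inner_self_nonneg

lemma inner_π_le_of_isSelfAdjoint [StarOrderedRing D] [StarModule ℂ D] {b : A}
    (hb : IsSelfAdjoint b) (ξ : ρ.dom) :
    inner D (ξ : E) (ρ.π b ξ : E) ≤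
      (1 / 4 : ℝ) • inner D (ξ : E) ξ + inner D (ρ.π b ξ : E) (ρ.π b ξ) :=
  inner_le_of_inner_comm (by rw [ρ.π_star, hb.star_eq])

lemma graphSq_nonneg [StarOrderedRing D] (a : A) (ξ : ρ.dom) : 0 ≤ graphSq ρ a ξ :=
  add_nonneg (α := D) CStarModuleOld.inner_self_nonneg CStarModuleOld.inner_self_nonneg

lemma graphSq_le_smul_graphSq_sum [StarOrderedRing D] [StarModule ℂ D] {ι : Type*} [Fintype ι]
    (a : ι → A) (i : ι) (ξ : ρ.dom) :
    graphSq ρ (a i) ξ ≤ (5 / 4 : ℝ) • graphSq ρ (∑ j, star (a j) * a j) ξ := by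
  set b := ∑ j, star (a j) * a j
  have hb : IsSelfAdjoint b := by
    simp only [b, IsSelfAdjoint, star_sum, star_mul, star_star]
  set x := inner D (ξ : E) ξ
  set z := inner D (ρ.π b ξ : E) (ρ.π b ξ)
  have hy := (ρ.inner_π_self_le_inner_π_sum a i ξ).trans (ρ.inner_π_le_of_isSelfAdjoint hb ξ)
  have hz : (0 : D) ≤ (1 / 2 * (1 / 2) : ℝ) • z := by
    rw [← inner_smul_self_real]
    exact CStarModuleOld.inner_self_nonneg
  calc graphSq ρ (a i) ξ ≤ x + ((1 / 4 : ℝ) • x + z) := add_le_add_right hy x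
    _ ≤ x + ((1 / 4 : ℝ) • x + z) + (1 / 2 * (1 / 2) : ℝ) • z := le_add_of_nonneg_right hz
    _ = (5 / 4 : ℝ) • graphSq ρ b ξ := by unfold graphSq; module

lemma graphNorm_le_of_graphSq_le_smul [CStarRing D] [StarOrderedRing D] [IsScalarTower ℂ D D]
    [SMulCommClass ℂ D D] [StarModule ℂ D] [CompleteSpace D] {a b : A} {c : ℝ} (hc : 1 ≤ c)
    (ξ : ρ.dom) (h : graphSq ρ a ξ ≤ c • graphSq ρ b ξ) :
    graphNorm ρ a ξ ≤ c * graphNorm ρ b ξ := by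
  let _ : NonUnitalCStarAlgebra D :=
    { ‹NonUnitalNormedRing D›, ‹StarRing D›, ‹CStarRing D›, ‹CompleteSpace D›,
      ‹NormedSpace ℂ D›, ‹IsScalarTower ℂ D D›, ‹SMulCommClass ℂ D D›, ‹StarModule ℂ D› with }
  have hnorm : ‖graphSq ρ a ξ‖ ≤ c * ‖graphSq ρ b ξ‖ := by
    simpa [norm_smul, abs_of_nonneg (zero_le_one.trans hc)] using
      CStarAlgebra.norm_le_norm_of_nonneg_of_le (ρ.graphSq_nonneg a ξ) h
  calc graphNorm ρ a ξ ≤ √(c ^ 2 * ‖graphSq ρ b ξ‖) :=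
        Real.sqrt_le_sqrt (hnorm.trans (by gcongr; nlinarith))
    _ = c * graphNorm ρ b ξ := by
        rw [Real.sqrt_mul (sq_nonneg c), Real.sqrt_sq (zero_le_one.trans hc), graphNorm]

end ModuleRep

theorem graph_norms_directed (ρ : ModuleRep A D E) {n : ℕ} (a : Fin n → A) (i : Fin n)
    (ξ : ρ.dom) :
    0 ≤ graphSq ρ (a i) ξ ∧
    graphSq ρ (a i) ξ ≤ ((5 : ℝ) / 4) • graphSq ρ (∑ j, star (a j) * a j) ξ ∧
    graphNorm ρ (a i) ξ ≤ (5 / 4) * graphNorm ρ (∑ j, star (a j) * a j) ξ := by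
  have hle := ρ.graphSq_le_smul_graphSq_sum a i ξ
  exact ⟨ρ.graphSq_nonneg (a i) ξ, hle,
    ρ.graphNorm_le_of_graphSq_le_smul (by norm_num) ξ hle⟩
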